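/- arXiv:2001.07325 — 5 statements merged into one kernel-verified Lean document; each statement's English description precedes it below -/
import Mathlib

section
/- For any two values x, y ∈ [n] and any permutation π ∈ S_n, the dual Foata–Strehl maps commute: φ_x(φ_y(π)) = φ_y(φ_x(π)). -/
/-- The extended one-line word of `w`, read 1-indexed, with the boundary
convention `π₀ = π_{n+1} = ∞`. -/
def ext (w : List ℕ) (i : ℕ) : ℕ∞ :=
  if 1 ≤ i ∧ i ≤ w.length then (w.getD (i - 1) 0 : ℕ∞) else ⊤

/-- The pinnacle set of the word `w`: values `π_i` with `π_{i-1} < π_i > π_{i+1}`. -/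
def pinnSet (w : List ℕ) : Finset ℕ :=
  ((Finset.Icc 1 w.length).filter fun i =>
      ext w (i - 1) < ext w i ∧ ext w (i + 1) < ext w i).image fun i => w.getD (i - 1) 0

/-- The vale set of the word `w`: values `π_i` with `π_{i-1} > π_i < π_{i+1}`. -/
def valeSet (w : List ℕ) : Finset ℕ :=
  ((Finset.Icc 1 w.length).filter fun i =>
      ext w i < ext w (i - 1) ∧ ext w i < ext w (i + 1)).image fun i => w.getD (i - 1) 0

/-- `w` is the one-line notation of a permutation of `[n] = {1, …, n}`. -/
def IsPermOf (n : ℕ) (w : List ℕ) : Prop := w.Perm (List.range' 1 n)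

/-- `w₁` in the `x`-factorization `w = w₁ w₂ x w₄ w₅`. -/
def fsW1 (x : ℕ) (w : List ℕ) : List ℕ :=
  ((w.take (w.idxOf x)).reverse.dropWhile fun a => decide (a < x)).reverse

/-- `w₂` in the `x`-factorization: the longest contiguous subword immediately to the
left of `x` all of whose letters are smaller than `x`. -/
def fsW2 (x : ℕ) (w : List ℕ) : List ℕ :=
  ((w.take (w.idxOf x)).reverse.takeWhile fun a => decide (a < x)).reverse

/-- `w₄` in the `x`-factorization: the longest contiguous subword immediately to the
right of `x` all of whose letters are smaller than `x`. -/
def fsW4 (x : ℕ) (w : List ℕ) : List ℕ :=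
  (w.drop (w.idxOf x + 1)).takeWhile fun a => decide (a < x)

/-- `w₅` in the `x`-factorization `w = w₁ w₂ x w₄ w₅`. -/
def fsW5 (x : ℕ) (w : List ℕ) : List ℕ :=
  (w.drop (w.idxOf x + 1)).dropWhile fun a => decide (a < x)

/-- The dual Foata–Strehl map `φ_x : w₁ w₂ x w₄ w₅ ↦ w₁ w₄ x w₂ w₅`. -/
def dualFS (x : ℕ) (w : List ℕ) : List ℕ :=
  if x ∈ w then fsW1 x w ++ fsW4 x w ++ [x] ++ fsW2 x w ++ fsW5 x w else w

/-- The dual Foata–Strehl map `φ_S` for a set `S`, i.e. the composition of the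
(commuting) maps `φ_x` over `x ∈ S`. -/
noncomputable def dualFSFinset (S : Finset ℕ) (w : List ℕ) : List ℕ :=
  S.toList.foldr dualFS w

/-- The largest letter of a word, with `wmax [] = 0`. -/
def wmax (w : List ℕ) : ℕ := w.foldr max 0

/-- The subword of `w` consisting of the letters lying in `A`. -/
def restrictTo (w : List ℕ) (A : Finset ℕ) : List ℕ :=
  w.filter fun a => decide (a ∈ A)

/-- `N_{PV}(k) = |V_k| - |P_k|` (natural subtraction). -/
def nPV (P V : Finset ℕ) (k : ℕ) : ℕ :=
  (V.filter fun v => v < k).card - (P.filter fun p => p < k).card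

/-- `N_{PV}(k) = |V_k| - |P_k|` as an integer. -/
def nPVZ (P V : Finset ℕ) (k : ℕ) : ℤ :=
  ((V.filter fun v => v < k).card : ℤ) - ((P.filter fun p => p < k).card : ℤ)

/-- `(P, V)` is admissible: some permutation of `[n]` has pinnacle set `P` and
vale set `V`. -/
def AdmissiblePair (n : ℕ) (P V : Finset ℕ) : Prop :=
  ∃ w : List ℕ, IsPermOf n w ∧ pinnSet w = P ∧ valeSet w = V

open Classical in
/-- `𝒱(P)`: the collection of all vale sets `V` for which `(P, V)` is admissible. -/
noncomputable def valeSetsOf (n : ℕ) (P : Finset ℕ) : Finset (Finset ℕ) :=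
  ((Finset.Icc 1 n).powerset).filter fun V => AdmissiblePair n P V

/-- `w` is FS-minimal: it has no double descents (with the `∞` boundary convention),
and for each pinnacle `p`, the `p`-factorization of the restriction of `w` to its
pinnacles and vales satisfies `max w₂ < max w₄`. -/
def FSMinimal (w : List ℕ) : Prop :=
  (∀ i ∈ Finset.Icc 1 w.length,
      ¬(ext w i < ext w (i - 1) ∧ ext w (i + 1) < ext w i)) ∧
  ∀ p ∈ pinnSet w,
    wmax (fsW2 p (restrictTo w (pinnSet w ∪ valeSet w))) <
      wmax (fsW4 p (restrictTo w (pinnSet w ∪ valeSet w)))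

/-- A `PV`-arrangement: a word listing each element of `P ∪ V` exactly once,
with pinnacle set `P` and vale set `V`. -/
def IsPVArrangement (P V : Finset ℕ) (α : List ℕ) : Prop :=
  α.Nodup ∧ α.toFinset = P ∪ V ∧ pinnSet α = P ∧ valeSet α = V

/-- A word is canonical (for pinnacle set `P`) if for each `p ∈ P` its
`p`-factorization satisfies `max w₂ < max w₄`. -/
def IsCanonical (P : Finset ℕ) (α : List ℕ) : Prop :=
  ∀ p ∈ P, wmax (fsW2 p α) < wmax (fsW4 p α)

/-- The number of descents of `w`: indices `j ∈ [n-1]` with `π_j > π_{j+1}`. -/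
def descentCount (w : List ℕ) : ℕ :=
  ((Finset.Icc 1 (w.length - 1)).filter fun j => w.getD j 0 < w.getD (j - 1) 0).card

/-- The original Foata–Strehl map `φ'_x`, defined like `φ_x` but with the words
`w₂, w₄` consisting of letters GREATER than `x`. -/
def origFS (x : ℕ) (w : List ℕ) : List ℕ :=
  if x ∈ w then
    ((w.take (w.idxOf x)).reverse.dropWhile fun a => decide (x < a)).reverse
      ++ ((w.drop (w.idxOf x + 1)).takeWhile fun a => decide (x < a)) ++ [x]
      ++ ((w.take (w.idxOf x)).reverse.takeWhile fun a => decide (x < a)).reverse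
      ++ ((w.drop (w.idxOf x + 1)).dropWhile fun a => decide (x < a))
  else w

/-- `C(l)`: weak compositions `(t₁, …, t_l)` of `l` with `t₁ + ⋯ + t_k ≥ k` for all `k`. -/
def weakComps (l : ℕ) : Finset (Fin l → ℕ) :=
  (Fintype.piFinset fun _ : Fin l => Finset.range (l + 1)).filter fun t =>
    (∑ i, t i) = l ∧ ∀ k : Fin l, (k : ℕ) + 1 ≤ ∑ i ∈ Finset.univ.filter (fun j => j ≤ k), t i

/-- `g_{i+1} = |G_{i+1}|`, the size of the `(i+1)`-st gap set
`G_{i+1} = {j ∈ [n] \ P : p_i < j < p_{i+1}}` (0-indexed `i`, with `p₀ = 1`). -/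
def gapCard (n : ℕ) (P : Finset ℕ) (i : ℕ) : ℕ :=
  (((Finset.Icc 1 n) \ P).filter fun j =>
      (if i = 0 then 1 else (P.sort (· ≤ ·)).getD (i - 1) 0) < j ∧
        j < (P.sort (· ≤ ·)).getD i 0).card

/-!
For `x < y`, the maximal run of letters `≤ x` around `x` lies inside the `w₂` or the `w₄` of the
`y`-factorization, or outside the block `w₂ y w₄`, separated from it by a letter `≥ y` (the last
letter of `w₁` or the first of `w₅`). In each case `φ_y` moves a segment containing this run
rigidly, and `φ_x` rearranges that segment in the same way wherever it stands, because the
segment is flanked by letters `≥ x` or by the ends of the word.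
-/

theorem List.notMem_take_idxOf {α : Type*} [BEq α] [LawfulBEq α] (x : α) (l : List α) :
    x ∉ l.take (l.idxOf x) := by
  induction l with
  | nil => simp
  | cons a l ih =>
    by_cases h : a = x
    · simp [h]
    · simpa [List.idxOf_cons_ne _ h, Ne.symm h] using ih

theorem List.eq_false_of_mem_head?_dropWhile {α : Type*} {p : α → Bool} {l : List α} {a : α}
    (ha : a ∈ (l.dropWhile p).head?) : p a = false := by
  simpa [Option.mem_def.1 ha] using List.head?_dropWhile_not p l

theorem List.takeWhile_append_of_head {α : Type*} {p : α → Bool} {l₁ l₂ : List α}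
    (h₁ : ∀ a ∈ l₁, p a) (h₂ : ∀ a ∈ l₂.head?, p a = false) : (l₁ ++ l₂).takeWhile p = l₁ := by
  rw [List.takeWhile_append_of_pos h₁]
  cases l₂ <;> simp_all

theorem List.dropWhile_append_of_head {α : Type*} {p : α → Bool} {l₁ l₂ : List α}
    (h₁ : ∀ a ∈ l₁, p a) (h₂ : ∀ a ∈ l₂.head?, p a = false) : (l₁ ++ l₂).dropWhile p = l₂ := by
  rw [List.dropWhile_append_of_pos h₁]
  cases l₂ <;> simp_all

/-- `w₁ ++ w₂ ++ [x] ++ w₄ ++ w₅` is the `x`-factorization of the word it spells. -/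
structure IsFactorization (x : ℕ) (w₁ w₂ w₄ w₅ : List ℕ) : Prop where
  notMem_w₁ : x ∉ w₁
  le_getLast_w₁ : ∀ a ∈ w₁.getLast?, x ≤ a
  w₂_lt : ∀ a ∈ w₂, a < x
  w₄_lt : ∀ a ∈ w₄, a < x
  le_head_w₅ : ∀ a ∈ w₅.head?, x ≤ a

theorem IsFactorization.dualFS_eq {x : ℕ} {w₁ w₂ w₄ w₅ : List ℕ}
    (h : IsFactorization x w₁ w₂ w₄ w₅) :
    dualFS x (w₁ ++ w₂ ++ [x] ++ w₄ ++ w₅) = w₁ ++ w₄ ++ [x] ++ w₂ ++ w₅ := by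
  have hx₂ : x ∉ w₂ := fun hx => (h.w₂_lt x hx).false
  have hidx : (w₁ ++ w₂ ++ [x] ++ w₄ ++ w₅).idxOf x = (w₁ ++ w₂).length := by
    simp [List.idxOf_append_of_notMem, h.notMem_w₁, hx₂]
  have hpre : (w₁ ++ w₂ ++ [x] ++ w₄ ++ w₅).take (w₁ ++ w₂).length = w₁ ++ w₂ := by
    rw [List.append_assoc, List.append_assoc, List.take_left' rfl]
  have hsuf : (w₁ ++ w₂ ++ [x] ++ w₄ ++ w₅).drop ((w₁ ++ w₂).length + 1) = w₄ ++ w₅ := by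
    rw [List.append_assoc, List.drop_left' (by simp; omega)]
  have h₂ : ∀ a ∈ w₂.reverse, decide (a < x) := by simpa using h.w₂_lt
  have h₁ : ∀ a ∈ w₁.reverse.head?, decide (a < x) = false := by
    simpa [List.head?_reverse] using h.le_getLast_w₁
  have h₄ : ∀ a ∈ w₄, decide (a < x) := by simpa using h.w₄_lt
  have h₅ : ∀ a ∈ w₅.head?, decide (a < x) = false := by simpa using h.le_head_w₅
  rw [dualFS, if_pos (by simp), fsW1, fsW2, fsW4, fsW5, hidx, hpre, hsuf, List.reverse_append,
    List.takeWhile_append_of_head h₂ h₁, List.dropWhile_append_of_head h₂ h₁,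
    List.takeWhile_append_of_head h₄ h₅, List.dropWhile_append_of_head h₄ h₅]
  simp

theorem exists_isFactorization {x : ℕ} {w : List ℕ} (hx : x ∈ w) :
    ∃ w₁ w₂ w₄ w₅, w = w₁ ++ w₂ ++ [x] ++ w₄ ++ w₅ ∧ IsFactorization x w₁ w₂ w₄ w₅ := by
  have hlt : w.idxOf x < w.length := List.idxOf_lt_length_iff.2 hx
  have h₁₂ : fsW1 x w ++ fsW2 x w = w.take (w.idxOf x) := by
    rw [fsW1, fsW2, ← List.reverse_append, List.takeWhile_append_dropWhile, List.reverse_reverse]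
  have h₄₅ : fsW4 x w ++ fsW5 x w = w.drop (w.idxOf x + 1) := List.takeWhile_append_dropWhile
  refine ⟨fsW1 x w, fsW2 x w, fsW4 x w, fsW5 x w, ?_, ⟨?_, ?_, ?_, ?_, ?_⟩⟩
  · conv_lhs => rw [← List.take_append_drop (w.idxOf x) w]
    rw [List.drop_eq_getElem_cons hlt, List.getElem_idxOf hlt, ← h₁₂, ← h₄₅]
    simp
  · exact fun h => List.notMem_take_idxOf x w (h₁₂ ▸ List.mem_append_left _ h)
  · intro a ha
    rw [fsW1, List.getLast?_reverse] at ha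
    simpa using List.eq_false_of_mem_head?_dropWhile ha
  · intro a ha
    simpa using List.mem_takeWhile_imp (List.mem_reverse.1 ha)
  · intro a ha
    simpa using List.mem_takeWhile_imp ha
  · intro a ha
    simpa using List.eq_false_of_mem_head?_dropWhile ha

theorem dualFS_of_notMem {x : ℕ} {w : List ℕ} (hx : x ∉ w) : dualFS x w = w := if_neg hx

theorem dualFS_perm (x : ℕ) (w : List ℕ) : (dualFS x w).Perm w := by
  by_cases hx : x ∈ w
  · obtain ⟨w₁, w₂, w₄, w₅, rfl, h⟩ := exists_isFactorization hx
    rw [h.dualFS_eq, List.perm_iff_count]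
    intro a
    simp only [List.count_append]
    omega
  · rw [dualFS_of_notMem hx]

theorem dualFS_append_left {x : ℕ} {P m : List ℕ} (hxP : x ∉ P) (hP : ∀ a ∈ P.getLast?, x ≤ a)
    (hx : x ∈ m) : dualFS x (P ++ m) = P ++ dualFS x m := by
  obtain ⟨w₁, w₂, w₄, w₅, rfl, h⟩ := exists_isFactorization hx
  have h' : IsFactorization x (P ++ w₁) w₂ w₄ w₅ :=
    { h with
      notMem_w₁ := by simp [hxP, h.notMem_w₁]
      le_getLast_w₁ := fun a ha => by
        rw [List.getLast?_append, Option.mem_def, Option.or_eq_some_iff] at ha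
        rcases ha with ha | ⟨-, ha⟩
        exacts [h.le_getLast_w₁ a ha, hP a ha] }
  rw [h.dualFS_eq]
  simpa using h'.dualFS_eq

theorem dualFS_append_right {x : ℕ} {m S : List ℕ} (hx : x ∈ m) (hS : ∀ a ∈ S.head?, x ≤ a) :
    dualFS x (m ++ S) = dualFS x m ++ S := by
  obtain ⟨w₁, w₂, w₄, w₅, rfl, h⟩ := exists_isFactorization hx
  have h' : IsFactorization x w₁ w₂ w₄ (w₅ ++ S) :=
    { h with
      le_head_w₅ := fun a ha => by
        rw [List.head?_append, Option.mem_def, Option.or_eq_some_iff] at ha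
        rcases ha with ha | ⟨-, ha⟩
        exacts [h.le_head_w₅ a ha, hS a ha] }
  rw [h.dualFS_eq]
  simpa using h'.dualFS_eq

theorem dualFS_append_append {x : ℕ} {P m S : List ℕ} (hxP : x ∉ P)
    (hP : ∀ a ∈ P.getLast?, x ≤ a) (hx : x ∈ m) (hS : ∀ a ∈ S.head?, x ≤ a) :
    dualFS x (P ++ m ++ S) = P ++ dualFS x m ++ S := by
  rw [dualFS_append_right (List.mem_append_right P hx) hS, dualFS_append_left hxP hP hx]

section

variable {x y : ℕ} {Y₁ Y₂ Y₄ Y₅ : List ℕ}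

theorem dualFS_comm_of_mem_w₁ (h : IsFactorization y Y₁ Y₂ Y₄ Y₅) (hxy : x < y) (hx : x ∈ Y₁) :
    dualFS x (dualFS y (Y₁ ++ Y₂ ++ [y] ++ Y₄ ++ Y₅)) =
      dualFS y (dualFS x (Y₁ ++ Y₂ ++ [y] ++ Y₄ ++ Y₅)) := by
  obtain ⟨Y, c, rfl⟩ := (List.eq_nil_or_concat' Y₁).resolve_left (List.ne_nil_of_mem hx)
  have hyc : y ≤ c := h.le_getLast_w₁ c (by simp)
  have hxY : x ∈ Y := (List.mem_append.1 hx).resolve_right (by simp; omega)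
  have h' : IsFactorization y (dualFS x Y ++ [c]) Y₂ Y₄ Y₅ :=
    { h with
      notMem_w₁ := fun hy => h.notMem_w₁ (by simpa [(dualFS_perm x Y).mem_iff] using hy)
      le_getLast_w₁ := by simpa using hyc }
  have frame : ∀ R, dualFS x (Y ++ ([c] ++ R)) = dualFS x Y ++ ([c] ++ R) := fun R =>
    dualFS_append_right hxY (by simp; omega)
  calc dualFS x (dualFS y (Y ++ [c] ++ Y₂ ++ [y] ++ Y₄ ++ Y₅))
      = dualFS x (Y ++ ([c] ++ (Y₄ ++ [y] ++ Y₂ ++ Y₅))) := by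
        rw [h.dualFS_eq]; simp only [List.append_assoc]
    _ = dualFS x Y ++ ([c] ++ (Y₄ ++ [y] ++ Y₂ ++ Y₅)) := frame _
    _ = dualFS y (dualFS x Y ++ [c] ++ Y₂ ++ [y] ++ Y₄ ++ Y₅) := by
        rw [h'.dualFS_eq]; simp only [List.append_assoc]
    _ = dualFS y (dualFS x (Y ++ [c] ++ Y₂ ++ [y] ++ Y₄ ++ Y₅)) := by
        simp only [List.append_assoc, frame]

theorem dualFS_comm_of_mem_w₂ (h : IsFactorization y Y₁ Y₂ Y₄ Y₅) (hxy : x < y) (hx : x ∈ Y₂)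
    (hx₁ : x ∉ Y₁) (hx₄ : x ∉ Y₄) :
    dualFS x (dualFS y (Y₁ ++ Y₂ ++ [y] ++ Y₄ ++ Y₅)) =
      dualFS y (dualFS x (Y₁ ++ Y₂ ++ [y] ++ Y₄ ++ Y₅)) := by
  have h' : IsFactorization y Y₁ (dualFS x Y₂) Y₄ Y₅ :=
    { h with w₂_lt := fun a ha => h.w₂_lt a ((dualFS_perm x Y₂).subset ha) }
  calc dualFS x (dualFS y (Y₁ ++ Y₂ ++ [y] ++ Y₄ ++ Y₅))
      = dualFS x ((Y₁ ++ Y₄ ++ [y]) ++ Y₂ ++ Y₅) := by rw [h.dualFS_eq]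
    _ = Y₁ ++ Y₄ ++ [y] ++ dualFS x Y₂ ++ Y₅ :=
        dualFS_append_append (by simp [hx₁, hx₄, hxy.ne]) (by simp [hxy.le]) hx
          fun a ha => hxy.le.trans (h.le_head_w₅ a ha)
    _ = dualFS y (Y₁ ++ dualFS x Y₂ ++ [y] ++ Y₄ ++ Y₅) := h'.dualFS_eq.symm
    _ = dualFS y (dualFS x (Y₁ ++ Y₂ ++ ([y] ++ Y₄ ++ Y₅))) := by
        rw [dualFS_append_append hx₁ (fun a ha => hxy.le.trans (h.le_getLast_w₁ a ha)) hx
          (by simp [hxy.le])]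
        simp only [List.append_assoc]
    _ = dualFS y (dualFS x (Y₁ ++ Y₂ ++ [y] ++ Y₄ ++ Y₅)) := by simp only [List.append_assoc]

theorem dualFS_comm_of_mem_w₄ (h : IsFactorization y Y₁ Y₂ Y₄ Y₅) (hxy : x < y) (hx : x ∈ Y₄)
    (hx₁ : x ∉ Y₁) (hx₂ : x ∉ Y₂) :
    dualFS x (dualFS y (Y₁ ++ Y₂ ++ [y] ++ Y₄ ++ Y₅)) =
      dualFS y (dualFS x (Y₁ ++ Y₂ ++ [y] ++ Y₄ ++ Y₅)) := by
  have h' : IsFactorization y Y₁ Y₂ (dualFS x Y₄) Y₅ :=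
    { h with w₄_lt := fun a ha => h.w₄_lt a ((dualFS_perm x Y₄).subset ha) }
  calc dualFS x (dualFS y (Y₁ ++ Y₂ ++ [y] ++ Y₄ ++ Y₅))
      = dualFS x (Y₁ ++ Y₄ ++ ([y] ++ Y₂ ++ Y₅)) := by
        rw [h.dualFS_eq]; simp only [List.append_assoc]
    _ = Y₁ ++ dualFS x Y₄ ++ ([y] ++ Y₂ ++ Y₅) :=
        dualFS_append_append hx₁ (fun a ha => hxy.le.trans (h.le_getLast_w₁ a ha)) hx
          (by simp [hxy.le])
    _ = dualFS y (Y₁ ++ Y₂ ++ [y] ++ dualFS x Y₄ ++ Y₅) := by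
        rw [h'.dualFS_eq]; simp only [List.append_assoc]
    _ = dualFS y (dualFS x ((Y₁ ++ Y₂ ++ [y]) ++ Y₄ ++ Y₅)) := by
        rw [dualFS_append_append (by simp [hx₁, hx₂, hxy.ne]) (by simp [hxy.le]) hx
          fun a ha => hxy.le.trans (h.le_head_w₅ a ha)]

theorem dualFS_comm_of_mem_w₅ (h : IsFactorization y Y₁ Y₂ Y₄ Y₅) (hxy : x < y) (hx : x ∈ Y₅)
    (hx₁ : x ∉ Y₁) (hx₂ : x ∉ Y₂) (hx₄ : x ∉ Y₄) :
    dualFS x (dualFS y (Y₁ ++ Y₂ ++ [y] ++ Y₄ ++ Y₅)) =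
      dualFS y (dualFS x (Y₁ ++ Y₂ ++ [y] ++ Y₄ ++ Y₅)) := by
  obtain _ | ⟨c, Y⟩ := Y₅
  · exact absurd hx List.not_mem_nil
  have hyc : y ≤ c := h.le_head_w₅ c (by simp)
  have hxY : x ∈ Y := (List.mem_cons.1 hx).resolve_left (by omega)
  have h' : IsFactorization y Y₁ Y₂ Y₄ (c :: dualFS x Y) :=
    { h with le_head_w₅ := by simpa using hyc }
  have frame : ∀ P, x ∉ P → dualFS x (P ++ [c] ++ Y) = P ++ [c] ++ dualFS x Y := fun P hP =>
    dualFS_append_left (by simp [hP]; omega)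
      (by rw [List.getLast?_concat]; simpa using hxy.le.trans hyc) hxY
  calc dualFS x (dualFS y (Y₁ ++ Y₂ ++ [y] ++ Y₄ ++ c :: Y))
      = dualFS x ((Y₁ ++ Y₄ ++ [y] ++ Y₂) ++ [c] ++ Y) := by rw [h.dualFS_eq]; simp
    _ = (Y₁ ++ Y₄ ++ [y] ++ Y₂) ++ [c] ++ dualFS x Y := frame _ (by simp [hx₁, hx₂, hx₄, hxy.ne])
    _ = dualFS y (Y₁ ++ Y₂ ++ [y] ++ Y₄ ++ c :: dualFS x Y) := by rw [h'.dualFS_eq]; simp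
    _ = dualFS y (dualFS x ((Y₁ ++ Y₂ ++ [y] ++ Y₄) ++ [c] ++ Y)) := by
        rw [frame _ (by simp [hx₁, hx₂, hx₄, hxy.ne])]; simp
    _ = dualFS y (dualFS x (Y₁ ++ Y₂ ++ [y] ++ Y₄ ++ c :: Y)) := by simp

end

theorem dualFS_comm_of_notMem {x y : ℕ} {w : List ℕ} (hx : x ∉ w) :
    dualFS x (dualFS y w) = dualFS y (dualFS x w) := by
  rw [dualFS_of_notMem hx, dualFS_of_notMem fun h => hx ((dualFS_perm y w).subset h)]

theorem dualFS_comm_of_lt {x y : ℕ} {w : List ℕ} (hxy : x < y) (hw : w.Nodup) :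
    dualFS x (dualFS y w) = dualFS y (dualFS x w) := by
  by_cases hx : x ∈ w; swap
  · exact dualFS_comm_of_notMem hx
  by_cases hy : y ∈ w; swap
  · exact (dualFS_comm_of_notMem hy).symm
  obtain ⟨Y₁, Y₂, Y₄, Y₅, rfl, h⟩ := exists_isFactorization hy
  have hcount := List.count_eq_one_of_mem hw hx
  simp only [List.count_append, List.count_singleton, beq_iff_eq] at hcount
  rcases (by simpa [hxy.ne] using hx : x ∈ Y₁ ∨ x ∈ Y₂ ∨ x ∈ Y₄ ∨ x ∈ Y₅) with hx | hx | hx | hx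
    <;> have hpos := List.count_pos_iff.2 hx
  · exact dualFS_comm_of_mem_w₁ h hxy hx
  · exact dualFS_comm_of_mem_w₂ h hxy hx (List.count_eq_zero.1 (by omega))
      (List.count_eq_zero.1 (by omega))
  · exact dualFS_comm_of_mem_w₄ h hxy hx (List.count_eq_zero.1 (by omega))
      (List.count_eq_zero.1 (by omega))
  · exact dualFS_comm_of_mem_w₅ h hxy hx (List.count_eq_zero.1 (by omega))
      (List.count_eq_zero.1 (by omega)) (List.count_eq_zero.1 (by omega))

theorem dualFS_comm_of_nodup (x y : ℕ) {w : List ℕ} (hw : w.Nodup) :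
    dualFS x (dualFS y w) = dualFS y (dualFS x w) := by
  rcases lt_trichotomy x y with hxy | rfl | hxy
  exacts [dualFS_comm_of_lt hxy hw, rfl, (dualFS_comm_of_lt hxy hw).symm]

theorem dualFS_comm_general (n x y : ℕ) (π : List ℕ) (hπ : IsPermOf n π) :
    dualFS x (dualFS y π) = dualFS y (dualFS x π) :=
  dualFS_comm_of_nodup x y (hπ.nodup_iff.2 List.nodup_range')

/-- the dual Foata–Strehl maps commute:
`φ_x(φ_y(π)) = φ_y(φ_x(π))` for all `x, y ∈ [n]` and `π ∈ S_n`. -/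
theorem dualFS_comm (n x y : ℕ) (hx : x ∈ Finset.Icc 1 n) (hy : y ∈ Finset.Icc 1 n)
    (π : List ℕ) (hπ : IsPermOf n π) :
    dualFS x (dualFS y π) = dualFS y (dualFS x π) :=
  dualFS_comm_general n x y π hπ
end

section
/- If π ∈ S_n has pinnacle set P = {p_1, …, p_ℓ}, then for every i ∈ [ℓ], the permutations π and φ_{p_i}(π) have the same number of descents (indices j ∈ [n−1] with π_j > π_{j+1}). -/
/-! A pinnacle `p` has smaller neighbours on both sides, so in its factorization
`w₁ w₂ p w₄ w₅` the blocks `w₂` and `w₄` are nonempty with all letters below `p`, while the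
last letter of `w₁` and the first letter of `w₅` exceed `p` (they are not below `p` and differ
from it). The descents of `w₁ w₂ p w₄ w₅` are therefore those inside the five blocks, one at
`w₁ | w₂` when `w₁ ≠ []`, and one at `p | w₄`; this count is symmetric in `w₂` and `w₄`, hence
invariant under `φ_p`. -/

def descents : List ℕ → ℕ
  | a :: b :: t => (if b < a then 1 else 0) + descents (b :: t)
  | _ => 0

lemma descentCount_eq_sum (w : List ℕ) :
    descentCount w =
      ∑ k ∈ Finset.range (w.length - 1), if w.getD (k + 1) 0 < w.getD k 0 then 1 else 0 := by
  rw [descentCount, Finset.card_filter, ← Finset.Ico_add_one_right_eq_Icc,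
    Finset.sum_Ico_eq_sum_range]
  simp only [add_tsub_cancel_right, add_comm 1]

theorem descentCount_eq_descents : ∀ w : List ℕ, descentCount w = descents w
  | [] | [_] => rfl
  | a :: b :: t => by
    rw [descents, ← descentCount_eq_descents (b :: t), descentCount_eq_sum,
      descentCount_eq_sum, List.length_cons, List.length_cons, Nat.add_sub_cancel,
      Finset.sum_range_succ', add_comm]
    rfl

def joinDescent (u v : List ℕ) : ℕ :=
  match u.getLast?, v.head? with
  | some a, some b => if b < a then 1 else 0
  | _, _ => 0

lemma joinDescent_eq_zero {u v : List ℕ} (h : ∀ a ∈ u.getLast?, ∀ b ∈ v.head?, a ≤ b) :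
    joinDescent u v = 0 := by
  unfold joinDescent
  split
  · next a b ha hb => exact if_neg (h a ha b hb).not_gt
  · rfl

lemma joinDescent_eq_one {u v : List ℕ} {a b : ℕ} (ha : a ∈ u.getLast?) (hb : b ∈ v.head?)
    (hba : b < a) : joinDescent u v = 1 := by
  rw [Option.mem_def] at ha hb
  simp [joinDescent, ha, hb, hba]

lemma descents_cons (a : ℕ) (l : List ℕ) :
    descents (a :: l) = joinDescent [a] l + descents l := by
  cases l <;> rfl

lemma descents_append : ∀ u v : List ℕ,
    descents (u ++ v) = descents u + joinDescent u v + descents v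
  | [], v => by simp [descents, joinDescent]
  | [a], v => by simp [descents_cons a v, descents]
  | a :: b :: t, v => by
    have ih := descents_append (b :: t) v
    rw [List.cons_append] at ih
    rw [List.cons_append, List.cons_append, descents, ih, descents]
    simp [joinDescent, add_assoc]

theorem descents_append_small_cons_small_append {A X Y D : List ℕ} {x : ℕ}
    (hX : X ≠ []) (hY : Y ≠ []) (hXx : ∀ b ∈ X, b < x) (hYx : ∀ b ∈ Y, b < x)
    (hA : ∀ a ∈ A.getLast?, x < a) (hD : ∀ d ∈ D.head?, x < d) :
    descents (A ++ X ++ x :: Y ++ D) =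
      (if A = [] then 0 else 1) + descents A + descents X + 1 + descents Y + descents D := by
  have hXhead : X.head hX ∈ (X ++ x :: (Y ++ D)).head? := by simp [List.head?_eq_some_head hX]
  have hA_X : joinDescent A (X ++ x :: (Y ++ D)) = if A = [] then 0 else 1 := by
    split_ifs with hAnil
    · simp [hAnil, joinDescent]
    · exact joinDescent_eq_one (List.getLast?_eq_some_getLast hAnil) hXhead
        ((hXx _ (List.head_mem hX)).trans (hA _ (List.getLast?_eq_some_getLast hAnil)))
  have hX_x : joinDescent X (x :: (Y ++ D)) = 0 :=
    joinDescent_eq_zero fun a ha b hb => by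
      simp only [List.head?_cons, Option.mem_some_iff] at hb
      exact hb ▸ (hXx a (List.mem_of_getLast? ha)).le
  have hx_Y : joinDescent [x] (Y ++ D) = 1 :=
    joinDescent_eq_one (a := x) rfl (by simp [List.head?_eq_some_head hY])
      (hYx _ (List.head_mem hY))
  have hY_D : joinDescent Y D = 0 :=
    joinDescent_eq_zero fun a ha b hb =>
      ((hYx a (List.mem_of_getLast? ha)).trans (hD b hb)).le
  simp only [List.append_assoc, List.cons_append, descents_append A, descents_append X,
    descents_cons x, descents_append Y, hA_X, hX_x, hx_Y, hY_D]
  ring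

lemma ext_zero (w : List ℕ) : ext w 0 = ⊤ := by
  simp [ext]

lemma ext_of_length_lt {w : List ℕ} {i : ℕ} (h : w.length < i) : ext w i = ⊤ := by
  simp [ext, h.not_ge]

lemma ext_succ_of_lt {w : List ℕ} {j : ℕ} (h : j < w.length) : ext w (j + 1) = w[j] := by
  simp [ext, Nat.succ_le_of_lt h, List.getElem?_eq_getElem h]

lemma exists_eq_append_of_mem_pinnSet {w : List ℕ} {p : ℕ} (hp : p ∈ pinnSet w) :
    ∃ L a b R, w = L ++ a :: p :: b :: R ∧ a < p ∧ b < p := by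
  obtain ⟨i, hi, rfl⟩ := Finset.mem_image.1 hp
  simp only [Finset.mem_filter, Finset.mem_Icc] at hi
  obtain ⟨⟨hi1, hin⟩, hleft, hright⟩ := hi
  obtain _ | _ | j := i
  · omega
  · simp [ext_zero] at hleft
  have hj : j + 2 < w.length := by
    by_contra hj
    simp [ext_of_length_lt (show w.length < j + 2 + 1 by omega)] at hright
  simp only [Nat.add_sub_cancel, show j + 2 = j + 1 + 1 from rfl, ext_succ_of_lt hj,
    ext_succ_of_lt (show j + 1 < w.length by omega), ext_succ_of_lt (show j < w.length by omega),
    Nat.cast_lt] at hleft hright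
  rw [Nat.add_sub_cancel, List.getD_eq_getElem _ _ (by omega)]
  refine ⟨w.take j, w[j], w[j + 2], w.drop (j + 3), ?_, hleft, hright⟩
  rw [List.getElem_cons_drop, List.getElem_cons_drop, List.getElem_cons_drop,
    List.take_append_drop]

section Factorization

variable {α : Type*} [BEq α] [LawfulBEq α] {L R : List α} {x : α}

lemma take_idxOf_append_cons (hx : x ∉ L) : (L ++ x :: R).take ((L ++ x :: R).idxOf x) = L := by
  simp [List.idxOf_append_of_notMem hx]

lemma drop_idxOf_append_cons (hx : x ∉ L) :
    (L ++ x :: R).drop ((L ++ x :: R).idxOf x + 1) = R := by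
  simp [List.idxOf_append_of_notMem hx]

end Factorization

lemma dualFS_append_cons {L R : List ℕ} {x : ℕ} (hx : x ∉ L) :
    dualFS x (L ++ x :: R) =
      (L.reverse.dropWhile (· < x)).reverse ++ R.takeWhile (· < x) ++
        x :: (L.reverse.takeWhile (· < x)).reverse ++ R.dropWhile (· < x) := by
  simp [dualFS, fsW1, fsW2, fsW4, fsW5, take_idxOf_append_cons hx, drop_idxOf_append_cons hx]

lemma lt_of_mem_head?_dropWhile {α : Type*} [LinearOrder α] {l : List α} {x d : α}
    (hx : x ∉ l) (hd : d ∈ (l.dropWhile (· < x)).head?) : x < d := by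
  have hnot := List.head?_dropWhile_not (· < x) l
  rw [Option.mem_def] at hd
  rw [hd] at hnot
  have hdl : d ∈ l := (List.dropWhile_sublist _).mem (List.mem_of_mem_head? hd)
  exact lt_of_le_of_ne (by simpa using hnot) (fun h => hx (h ▸ hdl))

theorem descents_dualFS_of_neighbors_lt {L R : List ℕ} {a x b : ℕ} (hL : x ∉ L) (hR : x ∉ R)
    (hax : a < x) (hbx : b < x) :
    descents (dualFS x (L ++ a :: x :: b :: R)) = descents (L ++ a :: x :: b :: R) := by
  have hxL : x ∉ L ++ [a] := by simp [hL, hax.ne']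
  have hxR : x ∉ b :: R := by simp [hR, hbx.ne']
  set M := (L ++ [a]).reverse with hM
  have hB : (M.takeWhile (· < x)).reverse ≠ [] := by simp [M, hax]
  have hC : (b :: R).takeWhile (· < x) ≠ [] := by simp [hbx]
  have hBx : ∀ c ∈ (M.takeWhile (· < x)).reverse, c < x := fun c hc => by
    simpa using List.mem_takeWhile_imp (List.mem_reverse.1 hc)
  have hCx : ∀ c ∈ (b :: R).takeWhile (· < x), c < x := fun c hc => by
    simpa using List.mem_takeWhile_imp hc
  have hA : ∀ d ∈ (M.dropWhile (· < x)).reverse.getLast?, x < d := fun d hd =>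
    lt_of_mem_head?_dropWhile (by rwa [hM, List.mem_reverse]) (List.getLast?_reverse ▸ hd)
  have hD : ∀ d ∈ ((b :: R).dropWhile (· < x)).head?, x < d := fun d hd =>
    lt_of_mem_head?_dropWhile hxR hd
  have hw : L ++ a :: x :: b :: R = (M.dropWhile (· < x)).reverse ++
      (M.takeWhile (· < x)).reverse ++ x :: (b :: R).takeWhile (· < x) ++
        (b :: R).dropWhile (· < x) := by
    rw [← List.reverse_append, List.takeWhile_append_dropWhile, hM, List.reverse_reverse]
    simp
  conv_rhs => rw [hw]
  rw [show L ++ a :: x :: b :: R = L ++ [a] ++ x :: b :: R by simp, dualFS_append_cons hxL,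
    ← hM, descents_append_small_cons_small_append hC hB hCx hBx hA hD,
    descents_append_small_cons_small_append hB hC hBx hCx hA hD]
  ring

/-- Lemma 3.2: for each pinnacle `p` of `π`, the permutations `π`
and `φ_p(π)` have the same number of descents. -/
theorem descentCount_dualFS (n : ℕ) (π : List ℕ) (hπ : IsPermOf n π) :
    ∀ p ∈ pinnSet π, descentCount π = descentCount (dualFS p π) := by
  intro p hp
  obtain ⟨L, a, b, R, rfl, hap, hbp⟩ := exists_eq_append_of_mem_pinnSet hp
  have hnd : (L ++ a :: p :: b :: R).Nodup := hπ.nodup_iff.2 List.nodup_range'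
  have hpL : p ∉ L := fun h => List.disjoint_of_nodup_append hnd h (by simp)
  have hpR : p ∉ R := fun h => (List.nodup_cons.1 hnd.of_append_right.of_cons).1 (by simp [h])
  rw [descentCount_eq_descents, descentCount_eq_descents,
    descents_dualFS_of_neighbors_lt hpL hpR hap hbp]
end

section
/- Let π ∈ S_n and let x, y be two distinct elements of [n]. If v_1 v_2 x v_4 v_5 is the x-factorization of π and α_1 α_2 x α_4 α_5 is the x-factorization of φ_y(π), then max(v_2) = max(α_2) and max(v_4) = max(α_4), where max of a word is its largest letter (with the convention max(∅) = 0 for the empty word). -/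
/-!
Write `π = a b y c d` for the `y`-factorization, so that `φ_y(π) = a c y b d`. Reversing a word
exchanges the roles of `w₂` and `w₄`, so it suffices to treat `w₄`, the maximal run of letters
below `x` to the right of `x`. If `x` lies in `b` or `c`, then `x < y`, and the run is cut off by
`y` or by the first letter of `d` (which is at least `y`), so it is the same word in `π` and in
`φ_y(π)`. If `x` lies in `d` nothing changes. If `x` lies in `a`, either `x < y` and the run
ends before `a` does (the last letter of `a` is at least `y`), or `x > y` and every letter of
`b y c` is below `x`, so the run either stops before this block or contains all of it; in
both cases the swap of `b` and `c` only permutes the run.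
-/

open List

section TakeWhile

variable {α : Type*} {p : α → Bool}

lemma takeWhile_append_of_exists_not {s t : List α} (h : ∃ z ∈ s, p z = false) :
    (s ++ t).takeWhile p = s.takeWhile p := by
  obtain ⟨z, hz, hpz⟩ := h
  rw [takeWhile_append, if_neg]
  intro hlen
  have hall := takeWhile_eq_self_iff.1 ((takeWhile_prefix p).eq_of_length hlen) z hz
  simp [hpz] at hall

lemma takeWhile_append_congr {s t t' : List α} (h : t.takeWhile p = t'.takeWhile p) :
    (s ++ t).takeWhile p = (s ++ t').takeWhile p := by
  simp only [takeWhile_append, h]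

lemma takeWhile_eq_nil_of_head? {l : List α} (h : ∀ z ∈ l.head?, p z = false) :
    l.takeWhile p = [] := by
  cases l with
  | nil => rfl
  | cons a l => simp [h a rfl]

lemma takeWhile_append_perm {s b b' t : List α} (hb : b ~ b') (hbp : ∀ z ∈ b, p z) :
    (s ++ b ++ t).takeWhile p ~ (s ++ b' ++ t).takeWhile p := by
  by_cases hs : ∀ z ∈ s, p z
  · rw [takeWhile_append_of_pos fun z hz => (mem_append.1 hz).elim (hs z) (hbp z),
      takeWhile_append_of_pos fun z hz => (mem_append.1 hz).elim (hs z) (hbp z ∘ hb.mem_iff.2)]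
    exact (hb.append_left s).append_right _
  · push Not at hs
    rw [append_assoc, append_assoc, takeWhile_append_of_exists_not (by simpa using hs),
      takeWhile_append_of_exists_not (by simpa using hs)]

end TakeWhile

lemma wmax_perm {l l' : List ℕ} (h : l ~ l') : wmax l = wmax l' :=
  h.foldr_op_eq

lemma wmax_reverse (l : List ℕ) : wmax l.reverse = wmax l :=
  wmax_perm (reverse_perm l)

section Factorization

variable {x y : ℕ} {u v w a b c d : List ℕ}

lemma fsW2_append_cons (hx : x ∉ u) :
    fsW2 x (u ++ x :: v) = (u.reverse.takeWhile fun a => decide (a < x)).reverse := by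
  rw [fsW2, idxOf_append_of_notMem hx, idxOf_cons_self, Nat.add_zero, take_left]

lemma fsW4_append_cons (hx : x ∉ u) :
    fsW4 x (u ++ x :: v) = v.takeWhile fun a => decide (a < x) := by
  rw [fsW4, idxOf_append_of_notMem hx, idxOf_cons_self, Nat.add_zero,
    ← singleton_append, ← append_assoc, drop_left' (by simp)]

lemma notMem_of_nodup_append_cons (h : (u ++ x :: v).Nodup) : x ∉ u ∧ x ∉ v := by
  simpa using (nodup_middle.1 h).notMem

lemma fsW4_of_nodup (h : (u ++ x :: v).Nodup) :
    fsW4 x (u ++ x :: v) = v.takeWhile fun a => decide (a < x) :=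
  fsW4_append_cons (notMem_of_nodup_append_cons h).1

lemma fsW2_eq_reverse_fsW4_reverse (hw : w.Nodup) (hx : x ∈ w) :
    fsW2 x w = (fsW4 x w.reverse).reverse := by
  obtain ⟨u, v, rfl⟩ := append_of_mem hx
  obtain ⟨hu, hv⟩ := notMem_of_nodup_append_cons hw
  rw [fsW2_append_cons hu, reverse_append, reverse_cons, append_assoc, singleton_append,
    fsW4_append_cons (mem_reverse.not.2 hv)]

/-- `a b y c d` is the `y`-factorization of `a ++ b ++ y :: c ++ d` whenever `y` occurs in
that word only once. -/
structure IsFactorization_s7 (y : ℕ) (a b c d : List ℕ) : Prop where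
  lt_of_mem_left : ∀ z ∈ b, z < y
  lt_of_mem_right : ∀ z ∈ c, z < y
  le_getLast? : ∀ z ∈ a.getLast?, y ≤ z
  le_head? : ∀ z ∈ d.head?, y ≤ z

lemma IsFactorization_s7.reverse (h : IsFactorization_s7 y a b c d) :
    IsFactorization_s7 y d.reverse c.reverse b.reverse a.reverse :=
  ⟨by simpa using h.lt_of_mem_right, by simpa using h.lt_of_mem_left,
    by simpa using h.le_head?, by simpa using h.le_getLast?⟩

lemma IsFactorization_s7.swap (h : IsFactorization_s7 y a b c d) : IsFactorization_s7 y a c b d :=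
  ⟨h.lt_of_mem_right, h.lt_of_mem_left, h.le_getLast?, h.le_head?⟩

lemma IsFactorization_s7.takeWhile_lt_eq_nil (h : IsFactorization_s7 y a b c d) (hxy : x < y) :
    d.takeWhile (fun a => decide (a < x)) = [] :=
  takeWhile_eq_nil_of_head? fun z hz => by
    have := h.le_head? z hz
    simp only [decide_eq_false_iff_not, not_lt]
    omega

lemma le_of_mem_head?_dropWhile {l : List ℕ} {z : ℕ}
    (hz : z ∈ (l.dropWhile fun a => decide (a < y)).head?) : y ≤ z := by
  have := head?_dropWhile_not (fun a => decide (a < y)) l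
  rw [Option.mem_def.1 hz] at this
  simpa using this

lemma eq_fsW_append (hy : y ∈ w) : w = fsW1 y w ++ fsW2 y w ++ y :: fsW4 y w ++ fsW5 y w := by
  have hlt : w.idxOf y < w.length := idxOf_lt_length_iff.2 hy
  have hleft : fsW1 y w ++ fsW2 y w = w.take (w.idxOf y) := by
    rw [fsW1, fsW2, ← reverse_append, takeWhile_append_dropWhile, reverse_reverse]
  have hright : w.drop (w.idxOf y) = y :: (fsW4 y w ++ fsW5 y w) := by
    rw [drop_eq_getElem_cons hlt, getElem_idxOf hlt, fsW4, fsW5, takeWhile_append_dropWhile]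
  rw [append_assoc _ (y :: _), cons_append, hleft, ← hright, take_append_drop]

lemma isFactorization_fsW (y : ℕ) (w : List ℕ) :
    IsFactorization_s7 y (fsW1 y w) (fsW2 y w) (fsW4 y w) (fsW5 y w) where
  lt_of_mem_left z hz := by
    simpa using mem_takeWhile_imp (mem_reverse.1 hz)
  lt_of_mem_right z hz := by
    simpa using mem_takeWhile_imp hz
  le_getLast? z hz := le_of_mem_head?_dropWhile (by rwa [fsW1, getLast?_reverse] at hz)
  le_head? z hz := le_of_mem_head?_dropWhile hz

lemma exists_isFactorization_s7 (hy : y ∈ w) :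
    ∃ a b c d, w = a ++ b ++ y :: c ++ d ∧ dualFS y w = a ++ c ++ y :: b ++ d ∧
      IsFactorization_s7 y a b c d :=
  ⟨_, _, _, _, eq_fsW_append hy, by simp [dualFS, hy], isFactorization_fsW y w⟩

end Factorization

lemma perm_swap_blocks (a b c d : List ℕ) (y : ℕ) :
    a ++ c ++ y :: b ++ d ~ a ++ b ++ y :: c ++ d := by
  rw [perm_iff_count]
  intro z
  simp only [count_append, count_cons]
  omega

section Swap

variable {x y : ℕ} {a b c d : List ℕ}

lemma wmax_fsW4_swap_of_mem_prefix (hf : IsFactorization_s7 y a b c d)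
    (hw : (a ++ b ++ y :: c ++ d).Nodup) (hx : x ∈ a) (hxy : x ≠ y) :
    wmax (fsW4 x (a ++ c ++ y :: b ++ d)) = wmax (fsW4 x (a ++ b ++ y :: c ++ d)) := by
  have hw' := (perm_swap_blocks a b c d y).nodup_iff.2 hw
  obtain ⟨u, v, rfl⟩ := append_of_mem hx
  rw [show u ++ x :: v ++ b ++ y :: c ++ d = u ++ x :: (v ++ (b ++ y :: c) ++ d) by simp]
    at hw ⊢
  rw [show u ++ x :: v ++ c ++ y :: b ++ d = u ++ x :: (v ++ (c ++ y :: b) ++ d) by simp]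
    at hw' ⊢
  rw [fsW4_of_nodup hw, fsW4_of_nodup hw']
  rcases lt_or_gt_of_ne hxy with hlt | hgt
  · -- `x` is not the last letter of `a`, which is at least `y`; so the run stops inside `v`
    obtain ⟨z, hz, hyz⟩ : ∃ z ∈ v, y ≤ z := by
      rcases eq_nil_or_concat v with rfl | ⟨v', z, rfl⟩
      · have := hf.le_getLast? x (by simp)
        omega
      · refine ⟨z, by simp, hf.le_getLast? z ?_⟩
        rw [concat_eq_append, ← cons_append, ← append_assoc, getLast?_concat]
        rfl
    have hzx : ∃ z ∈ v, decide (z < x) = false := ⟨z, hz, by simp; omega⟩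
    rw [append_assoc v, append_assoc v, takeWhile_append_of_exists_not hzx,
      takeWhile_append_of_exists_not hzx]
  · refine wmax_perm (takeWhile_append_perm (perm_append_comm.trans perm_middle.symm) ?_)
    simp only [mem_append, mem_cons, decide_eq_true_eq]
    rintro z (hz | rfl | hz)
    · exact (hf.lt_of_mem_right z hz).trans hgt
    · exact hgt
    · exact (hf.lt_of_mem_left z hz).trans hgt

lemma fsW4_swap_of_mem_left (hf : IsFactorization_s7 y a b c d)
    (hw : (a ++ b ++ y :: c ++ d).Nodup) (hx : x ∈ b) :
    fsW4 x (a ++ c ++ y :: b ++ d) = fsW4 x (a ++ b ++ y :: c ++ d) := by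
  have hxy : x < y := hf.lt_of_mem_left x hx
  have hw' := (perm_swap_blocks a b c d y).nodup_iff.2 hw
  obtain ⟨u, v, rfl⟩ := append_of_mem hx
  rw [show a ++ (u ++ x :: v) ++ y :: c ++ d = a ++ u ++ x :: (v ++ y :: (c ++ d)) by simp]
    at hw ⊢
  rw [show a ++ c ++ y :: (u ++ x :: v) ++ d = a ++ c ++ y :: u ++ x :: (v ++ d) by simp]
    at hw' ⊢
  rw [fsW4_of_nodup hw, fsW4_of_nodup hw', takeWhile_append_congr]
  rw [hf.takeWhile_lt_eq_nil hxy, takeWhile_cons_of_neg]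
  simp only [decide_eq_true_eq, not_lt, hxy.le]

lemma fsW4_swap_of_mem_suffix (hw : (a ++ b ++ y :: c ++ d).Nodup) (hx : x ∈ d) :
    fsW4 x (a ++ c ++ y :: b ++ d) = fsW4 x (a ++ b ++ y :: c ++ d) := by
  have hw' := (perm_swap_blocks a b c d y).nodup_iff.2 hw
  obtain ⟨u, v, rfl⟩ := append_of_mem hx
  simp only [← append_assoc] at hw hw' ⊢
  rw [fsW4_of_nodup hw, fsW4_of_nodup hw']

theorem wmax_fsW4_swap (hf : IsFactorization_s7 y a b c d) (hw : (a ++ b ++ y :: c ++ d).Nodup)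
    (hx : x ∈ a ++ b ++ y :: c ++ d) (hxy : x ≠ y) :
    wmax (fsW4 x (a ++ c ++ y :: b ++ d)) = wmax (fsW4 x (a ++ b ++ y :: c ++ d)) := by
  simp only [mem_append, mem_cons] at hx
  rcases hx with ((ha | hb) | hyx | hc) | hd
  · exact wmax_fsW4_swap_of_mem_prefix hf hw ha hxy
  · rw [fsW4_swap_of_mem_left hf hw hb]
  · exact absurd hyx hxy
  · rw [fsW4_swap_of_mem_left hf.swap ((perm_swap_blocks a b c d y).nodup_iff.2 hw) hc]
  · rw [fsW4_swap_of_mem_suffix hw hd]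

theorem wmax_fsW2_swap (hf : IsFactorization_s7 y a b c d) (hw : (a ++ b ++ y :: c ++ d).Nodup)
    (hx : x ∈ a ++ b ++ y :: c ++ d) (hxy : x ≠ y) :
    wmax (fsW2 x (a ++ c ++ y :: b ++ d)) = wmax (fsW2 x (a ++ b ++ y :: c ++ d)) := by
  have hperm := perm_swap_blocks a b c d y
  have hrev := wmax_fsW4_swap hf.reverse (by simpa using nodup_reverse.2 hw)
    (by simp only [mem_append, mem_cons, mem_reverse] at hx ⊢; tauto) hxy
  rw [fsW2_eq_reverse_fsW4_reverse (hperm.nodup_iff.2 hw) (hperm.mem_iff.2 hx),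
    fsW2_eq_reverse_fsW4_reverse hw hx, wmax_reverse, wmax_reverse]
  simpa using hrev

end Swap

theorem fs_factorization_max_general (n x y : ℕ) (hx : x ∈ Finset.Icc 1 n)
    (hxy : x ≠ y) (π : List ℕ) (hπ : IsPermOf n π) :
    wmax (fsW2 x π) = wmax (fsW2 x (dualFS y π)) ∧
      wmax (fsW4 x π) = wmax (fsW4 x (dualFS y π)) := by
  have hxπ : x ∈ π := hπ.mem_iff.2 <| by
    rw [Finset.mem_Icc] at hx
    rw [mem_range'_1]
    omega
  have hnd : π.Nodup := hπ.nodup_iff.2 nodup_range'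
  by_cases hyπ : y ∈ π
  · obtain ⟨a, b, c, d, rfl, hφ, hf⟩ := exists_isFactorization_s7 hyπ
    rw [hφ]
    exact ⟨(wmax_fsW2_swap hf hnd hxπ hxy).symm, (wmax_fsW4_swap hf hnd hxπ hxy).symm⟩
  · simp [dualFS, hyπ]

/-- Lemma 3.3: for distinct `x, y ∈ [n]`, the maxima of the words
`w₂` and `w₄` of the `x`-factorization are unchanged by `φ_y`. -/
theorem fs_factorization_max (n x y : ℕ) (hx : x ∈ Finset.Icc 1 n) (hy : y ∈ Finset.Icc 1 n)
    (hxy : x ≠ y) (π : List ℕ) (hπ : IsPermOf n π) :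
    wmax (fsW2 x π) = wmax (fsW2 x (dualFS y π)) ∧
      wmax (fsW4 x π) = wmax (fsW4 x (dualFS y π)) :=
  fs_factorization_max_general n x y hx hxy π hπ
end

section
/- Let π ∈ S_n have pinnacle set P and vale set V, and let p be any pinnacle of π. Then restriction to P ∪ V commutes with the dual Foata–Strehl map at p: φ_p(π)|_{P∪V} = φ_p(π|_{P∪V}), where π|_{P∪V} denotes the subword of π consisting of the letters in P ∪ V (in the order they appear in π), and φ_p applied to a word is defined via the p-factorization of that word. -/
/-!
Restriction to `S = P ∪ V` is a filter, hence distributes over concatenation: it sends the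
`p`-factorization `π = w₁ w₂ p w₄ w₅` to `w₁|_S w₂|_S p w₄|_S w₅|_S`, and `φ_p(π)` to
`w₁|_S w₄|_S p w₂|_S w₅|_S`. So it suffices that the former is the `p`-factorization
of `π|_S`. The letters of `w₂|_S` and `w₄|_S` are still below `p`; the point is that the
last letter of `w₁|_S` (and dually the first letter of `w₅|_S`) is still above `p`.
Otherwise the letters of `w₁` after it form a nonempty block avoiding `S`, ending above `p`
and flanked by letters at most `p`; the largest letter of that block would be a pinnacle
of `π`, hence in `S`.
-/
open List

section Lists

variable {α : Type*}

lemma exists_eq_append_cons_of_mem_head?_filter {q : α → Bool} {l : List α} {z : α}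
    (h : z ∈ (l.filter q).head?) : ∃ u v, l = u ++ z :: v ∧ ∀ y ∈ u, q y = false := by
  obtain ⟨L, hL⟩ := head?_eq_some_iff.1 h
  obtain ⟨u, v, rfl, hu, -, -⟩ := filter_eq_cons_iff.1 hL
  exact ⟨u, v, rfl, by simpa using hu⟩

lemma exists_eq_append_cons_of_mem_getLast?_filter {q : α → Bool} {l : List α} {z : α}
    (h : z ∈ (l.filter q).getLast?) : ∃ u v, l = u ++ z :: v ∧ ∀ y ∈ v, q y = false := by
  obtain ⟨L, hL⟩ := getLast?_eq_some_iff.1 h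
  obtain ⟨l₁, l₂, rfl, -, h₂⟩ := filter_eq_append_iff.1 hL
  obtain ⟨u, v, rfl, -, -, hv⟩ := filter_eq_cons_iff.1 h₂
  exact ⟨l₁ ++ u, v, by simp, by simpa [filter_eq_nil_iff] using hv⟩

lemma takeWhile_eq_nil_and_dropWhile_eq_self {q : α → Bool} {l : List α}
    (h : ∀ y ∈ l.head?, q y = false) : l.takeWhile q = [] ∧ l.dropWhile q = l := by
  cases l with
  | nil => simp
  | cons y l => simp [h y rfl]

end Lists

lemma mem_pinnSet_of_lt {l r : List ℕ} {x y z : ℕ} (hy : y < x) (hz : z < x) :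
    x ∈ pinnSet (l ++ y :: x :: z :: r) := by
  have hext : ∀ k < 3, ext (l ++ y :: x :: z :: r) (l.length + 1 + k) =
      (([y, x, z].getD k 0 : ℕ) : ℕ∞) := by
    intro k hk
    rw [ext, if_pos (by simp; omega), show l.length + 1 + k - 1 = l.length + k by omega,
      getD_append_right _ _ _ _ (by omega)]
    interval_cases k <;> simp
  rw [pinnSet, Finset.mem_image]
  refine ⟨l.length + 2, Finset.mem_filter.2 ⟨Finset.mem_Icc.2 ⟨by omega, by simp⟩, ?_⟩, by simp⟩
  rw [show l.length + 2 - 1 = l.length + 1 + 0 by omega,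
    show l.length + 2 = l.length + 1 + 1 by rfl,
    show l.length + 1 + 1 + 1 = l.length + 1 + 2 by rfl,
    hext 0 (by omega), hext 1 (by omega), hext 2 (by omega)]
  simp [hy, hz]

lemma mem_pinnSet_of_mem_getLast?_of_mem_head? {l r : List ℕ} {x y z : ℕ}
    (hy : y ∈ l.getLast?) (hz : z ∈ r.head?) (hyx : y < x) (hzx : z < x) :
    x ∈ pinnSet (l ++ x :: r) := by
  obtain ⟨l, rfl⟩ := getLast?_eq_some_iff.1 hy
  obtain ⟨r, rfl⟩ := head?_eq_some_iff.1 hz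
  simpa using mem_pinnSet_of_lt (l := l) (r := r) hyx hzx

lemma mem_of_mem_pinnSet {w : List ℕ} {x : ℕ} (h : x ∈ pinnSet w) : x ∈ w := by
  obtain ⟨i, hi, rfl⟩ := Finset.mem_image.1 h
  rw [Finset.mem_filter, Finset.mem_Icc] at hi
  rw [getD_eq_getElem _ _ (by omega)]
  exact getElem_mem _

lemma exists_mem_pinnSet_of_lt {l v r : List ℕ} {y z m : ℕ} (hnd : (l ++ v ++ r).Nodup)
    (hy : y ∈ l.getLast?) (hz : z ∈ r.head?) (hm : m ∈ v) (hym : y < m) (hzm : z < m) :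
    ∃ x ∈ v, x ∈ pinnSet (l ++ v ++ r) := by
  obtain ⟨M, hMv, hle⟩ := v.toFinset.exists_max_image id ⟨m, mem_toFinset.2 hm⟩
  simp only [mem_toFinset, id] at hMv hle
  obtain ⟨s, t, rfl⟩ := append_of_mem hMv
  have hndv : (s ++ M :: t).Nodup := (hnd.sublist (sublist_append_left _ _)).sublist
    (sublist_append_right _ _)
  have hlt : ∀ a ∈ s ++ t, a < M := fun a ha => lt_of_le_of_ne
    (hle a (by simp at ha ⊢; tauto))
    (by rintro rfl; exact (nodup_cons.1 (nodup_middle.1 hndv)).1 ha)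
  have hmM : m ≤ M := hle m hm
  have hL : ∃ y' ∈ (l ++ s).getLast?, y' < M := by
    rw [getLast?_append]
    cases hs : s.getLast? with
    | none => exact ⟨y, by simpa using hy, by omega⟩
    | some y' => exact ⟨y', rfl, hlt y' (mem_append_left _ (mem_of_getLast? hs))⟩
  have hR : ∃ z' ∈ (t ++ r).head?, z' < M := by
    rw [head?_append]
    cases ht : t.head? with
    | none => exact ⟨z, by simpa using hz, by omega⟩
    | some z' => exact ⟨z', rfl, hlt z' (mem_append_right _ (mem_of_head? ht))⟩
  obtain ⟨y', hy', hy'M⟩ := hL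
  obtain ⟨z', hz', hz'M⟩ := hR
  refine ⟨M, hMv, ?_⟩
  simpa using mem_pinnSet_of_mem_getLast?_of_mem_head? hy' hz' hy'M hz'M

section Factorization

variable {x : ℕ} {w : List ℕ}

lemma eq_fsW1_append_fsW2_append_cons (hx : x ∈ w) :
    w = fsW1 x w ++ fsW2 x w ++ x :: (fsW4 x w ++ fsW5 x w) := by
  have hk := idxOf_lt_length_iff.2 hx
  have hdrop : w.drop (w.idxOf x) = x :: w.drop (w.idxOf x + 1) := by
    rw [drop_eq_getElem_cons hk, getElem_idxOf hk]
  rw [fsW1, fsW2, ← reverse_append, takeWhile_append_dropWhile, reverse_reverse, fsW4, fsW5,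
    takeWhile_append_dropWhile, ← hdrop, take_append_drop]

lemma lt_of_mem_fsW2 {y : ℕ} (hy : y ∈ fsW2 x w) : y < x := by
  simpa using mem_takeWhile_imp (mem_reverse.1 hy)

lemma lt_of_mem_fsW4 {y : ℕ} (hy : y ∈ fsW4 x w) : y < x := by
  simpa using mem_takeWhile_imp hy

lemma not_lt_of_mem_getLast?_fsW1 {y : ℕ} (hy : y ∈ (fsW1 x w).getLast?) : ¬ y < x := by
  have h := head?_dropWhile_not (fun a => decide (a < x)) (w.take (w.idxOf x)).reverse
  rw [← getLast?_reverse, ← fsW1, Option.mem_def.1 hy] at h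
  simpa using h

lemma not_lt_of_mem_head?_fsW5 {y : ℕ} (hy : y ∈ (fsW5 x w).head?) : ¬ y < x := by
  have h := head?_dropWhile_not (fun a => decide (a < x)) (w.drop (w.idxOf x + 1))
  rw [← fsW5, Option.mem_def.1 hy] at h
  simpa using h

lemma dualFS_append_cons_append {a b c d : List ℕ} (hx : x ∉ a ++ b)
    (ha : ∀ y ∈ a.getLast?, ¬ y < x) (hb : ∀ y ∈ b, y < x) (hc : ∀ y ∈ c, y < x)
    (hd : ∀ y ∈ d.head?, ¬ y < x) :
    dualFS x (a ++ b ++ x :: (c ++ d)) = a ++ c ++ [x] ++ b ++ d := by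
  have hidx : (a ++ b ++ x :: (c ++ d)).idxOf x = (a ++ b).length := by
    rw [idxOf_append_of_notMem hx, idxOf_cons_self, add_zero]
  have hdrop : (a ++ b ++ x :: (c ++ d)).drop ((a ++ b).length + 1) = c ++ d := by
    rw [append_cons, drop_left' (by simp; omega)]
  obtain ⟨ha₁, ha₂⟩ := takeWhile_eq_nil_and_dropWhile_eq_self (q := fun y => decide (y < x))
    (l := a.reverse) (by simpa [head?_reverse] using ha)
  obtain ⟨hd₁, hd₂⟩ := takeWhile_eq_nil_and_dropWhile_eq_self (q := fun y => decide (y < x))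
    (l := d) (by simpa using hd)
  have hb' : ∀ y ∈ b.reverse, decide (y < x) = true := by simpa using hb
  have hc' : ∀ y ∈ c, decide (y < x) = true := by simpa using hc
  rw [dualFS, if_pos (by simp), fsW1, fsW2, fsW4, fsW5, hidx, take_left, hdrop, reverse_append,
    takeWhile_append_of_pos hb', dropWhile_append_of_pos hb', ha₁, ha₂,
    takeWhile_append_of_pos hc', dropWhile_append_of_pos hc', hd₁, hd₂]
  simp

end Factorization

lemma lt_of_mem_getLast?_restrictTo {S : Finset ℕ} {x : ℕ} {a b c : List ℕ}
    (hnd : (a ++ b ++ x :: c).Nodup) (hS : pinnSet (a ++ b ++ x :: c) ⊆ S)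
    (ha : ∀ y ∈ a.getLast?, ¬ y < x) (hb : ∀ y ∈ b, y < x) {z : ℕ}
    (hz : z ∈ (restrictTo a S).getLast?) : x < z := by
  have hxa : x ∉ a := fun h => (nodup_cons.1 (nodup_middle.1 hnd)).1 (by simp [h])
  obtain ⟨u, v, rfl, hv⟩ := exists_eq_append_cons_of_mem_getLast?_filter hz
  by_contra hzx
  cases hm : v.getLast? with
  | none =>
    obtain rfl : v = [] := getLast?_eq_none_iff.1 hm
    exact ha z (by simp) (lt_of_le_of_ne (not_lt.1 hzx) (by rintro rfl; simp at hxa))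
  | some m =>
    have hmv : m ∈ v := mem_of_getLast? hm
    have hxm : x < m := lt_of_le_of_ne
      (not_lt.1 (ha m (by rw [append_cons, getLast?_append, hm]; rfl)))
      (by rintro rfl; simp [hmv] at hxa)
    have hr : ∃ y ∈ (b ++ x :: c).head?, y < m := by
      cases b with
      | nil => exact ⟨x, rfl, hxm⟩
      | cons y b => exact ⟨y, rfl, (hb y mem_cons_self).trans hxm⟩
    obtain ⟨y, hy, hym⟩ := hr
    obtain ⟨t, htv, htS⟩ := exists_mem_pinnSet_of_lt (l := u ++ [z]) (by simpa using hnd)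
      (show z ∈ (u ++ [z]).getLast? by simp) hy hmv (by omega) hym
    simpa [hS (by simpa using htS)] using hv t htv

lemma lt_of_mem_head?_restrictTo {S : Finset ℕ} {x : ℕ} {a c d : List ℕ}
    (hnd : (a ++ x :: (c ++ d)).Nodup) (hS : pinnSet (a ++ x :: (c ++ d)) ⊆ S)
    (hc : ∀ y ∈ c, y < x) (hd : ∀ y ∈ d.head?, ¬ y < x) {z : ℕ}
    (hz : z ∈ (restrictTo d S).head?) : x < z := by
  have hxd : x ∉ d := fun h => (nodup_cons.1 (nodup_middle.1 hnd)).1 (by simp [h])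
  obtain ⟨u, v, rfl, hu⟩ := exists_eq_append_cons_of_mem_head?_filter hz
  by_contra hzx
  cases hm : u.head? with
  | none =>
    obtain rfl : u = [] := head?_eq_none_iff.1 hm
    exact hd z (by simp) (lt_of_le_of_ne (not_lt.1 hzx) (by rintro rfl; simp at hxd))
  | some m =>
    have hmu : m ∈ u := mem_of_head? hm
    have hxm : x < m := lt_of_le_of_ne (not_lt.1 (hd m (by simp [head?_append, hm])))
      (by rintro rfl; simp [hmu] at hxd)
    have hl : ∃ y ∈ (a ++ x :: c).getLast?, y < m := by
      rw [append_cons, getLast?_append]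
      cases hc' : c.getLast? with
      | none => exact ⟨x, by simp, hxm⟩
      | some y => exact ⟨y, rfl, (hc y (mem_of_getLast? hc')).trans hxm⟩
    obtain ⟨y, hy, hym⟩ := hl
    obtain ⟨t, htu, htS⟩ := exists_mem_pinnSet_of_lt (r := z :: v) (by simpa using hnd)
      hy (show z ∈ (z :: v).head? by simp) hmu hym (by omega)
    simpa [hS (by simpa using htS)] using hu t htu

/-- Lemma 3.4: restriction to `P ∪ V` commutes with the dual
Foata–Strehl map at a pinnacle `p`: `φ_p(π)|_{P∪V} = φ_p(π|_{P∪V})`. -/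
theorem restrictTo_dualFS (n : ℕ) (π : List ℕ) (hπ : IsPermOf n π)
    (p : ℕ) (hp : p ∈ pinnSet π) :
    restrictTo (dualFS p π) (pinnSet π ∪ valeSet π) =
      dualFS p (restrictTo π (pinnSet π ∪ valeSet π)) := by
  have hpπ : p ∈ π := mem_of_mem_pinnSet hp
  have hpS : p ∈ pinnSet π ∪ valeSet π := Finset.mem_union_left _ hp
  have hS : pinnSet π ⊆ pinnSet π ∪ valeSet π := Finset.subset_union_left
  have hnd : π.Nodup := hπ.nodup_iff.2 nodup_range'
  generalize pinnSet π ∪ valeSet π = S at hpS hS ⊢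
  have hdec := eq_fsW1_append_fsW2_append_cons hpπ
  have hφ : dualFS p π = fsW1 p π ++ fsW4 p π ++ [p] ++ fsW2 p π ++ fsW5 p π := by
    rw [dualFS, if_pos hpπ]
  rw [hdec] at hnd hS
  have hp₁₂ : p ∉ fsW1 p π ++ fsW2 p π :=
    (nodup_cons.1 (nodup_middle.1 hnd)).1 ∘ mem_append_left _
  have hfilter : restrictTo π S = restrictTo (fsW1 p π) S ++ restrictTo (fsW2 p π) S ++
      p :: (restrictTo (fsW4 p π) S ++ restrictTo (fsW5 p π) S) := by
    conv_lhs => rw [hdec]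
    simp [restrictTo, hpS]
  rw [hφ, hfilter, dualFS_append_cons_append]
  · simp [restrictTo, hpS]
  · rw [restrictTo, restrictTo, ← filter_append]
    exact fun h => hp₁₂ (mem_of_mem_filter h)
  · exact fun y hy => lt_asymm <| lt_of_mem_getLast?_restrictTo hnd hS
      (fun _ => not_lt_of_mem_getLast?_fsW1) (fun _ => lt_of_mem_fsW2) hy
  · exact fun y hy => lt_of_mem_fsW2 (mem_of_mem_filter hy)
  · exact fun y hy => lt_of_mem_fsW4 (mem_of_mem_filter hy)
  · exact fun y hy => lt_asymm <| lt_of_mem_head?_restrictTo (a := fsW1 p π ++ fsW2 p π) hnd hS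
      (fun _ => lt_of_mem_fsW4) (fun _ => not_lt_of_mem_head?_fsW5) hy
end

section
/- If π ∈ S_n has pinnacle set P = {p_1 < p_2 < ⋯ < p_ℓ} and vale set V, then N_{PV}(p_i) ≥ 2 for every i ∈ [ℓ]. -/
/-!
Fix a pinnacle `p` at position `ip`. A pinnacle to the left of `ip` is sent to the vale at
the bottom of the ascending run that ends at it, a pinnacle to the right of `ip` to the vale
at the bottom of the descending run that starts at it; `ip` itself is sent left. These vales
lie below their pinnacles, hence below `p`, and since no pinnacle can sit inside another
pinnacle's run the assignment is strictly increasing in positions. It never hits the vale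
ending the descending run from `ip`, so `|P_p| + 1 ≤ |V_p| - 1`.
-/

abbrev IsPinnacleAt (w : List ℕ) (i : ℕ) : Prop :=
  ext w (i - 1) < ext w i ∧ ext w (i + 1) < ext w i

abbrev IsValeAt (w : List ℕ) (i : ℕ) : Prop :=
  ext w i < ext w (i - 1) ∧ ext w i < ext w (i + 1)

section Ext

variable {w : List ℕ}

lemma ext_of_mem_Icc {i : ℕ} (hi : i ∈ Finset.Icc 1 w.length) :
    ext w i = (w.getD (i - 1) 0 : ℕ∞) := by
  rw [Finset.mem_Icc] at hi
  simp [ext, hi]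

lemma ext_of_notMem_Icc {i : ℕ} (hi : i ∉ Finset.Icc 1 w.length) : ext w i = ⊤ := by
  rw [Finset.mem_Icc] at hi
  simp [ext, hi]

lemma ext_lt_top {i : ℕ} (hi : i ∈ Finset.Icc 1 w.length) : ext w i < ⊤ := by
  simp [ext_of_mem_Icc hi]

lemma getD_injOn (hnd : w.Nodup) :
    Set.InjOn (fun i => w.getD (i - 1) 0) (Finset.Icc 1 w.length : Set ℕ) := by
  intro i hi j hj (hij : w.getD (i - 1) 0 = w.getD (j - 1) 0)
  simp only [Finset.coe_Icc, Set.mem_Icc] at hi hj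
  rw [List.getD_eq_getElem w 0 (by omega), List.getD_eq_getElem w 0 (by omega),
    hnd.getElem_inj_iff] at hij
  omega

lemma ext_lt_ext_iff {i j : ℕ} (hi : i ∈ Finset.Icc 1 w.length) (hj : j ∈ Finset.Icc 1 w.length) :
    ext w i < ext w j ↔ w.getD (i - 1) 0 < w.getD (j - 1) 0 := by
  rw [ext_of_mem_Icc hi, ext_of_mem_Icc hj, Nat.cast_lt]

lemma ext_lt_of_not_lt (hnd : w.Nodup) {i j : ℕ} (hi : i ∈ Finset.Icc 1 w.length) (hij : i ≠ j)
    (h : ¬ ext w j < ext w i) : ext w i < ext w j := by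
  refine lt_of_le_of_ne (not_lt.1 h) fun heq => ?_
  by_cases hj : j ∈ Finset.Icc 1 w.length
  · rw [ext_of_mem_Icc hi, ext_of_mem_Icc hj, Nat.cast_inj] at heq
    exact hij (getD_injOn hnd hi hj heq)
  · exact (ext_lt_top hi).ne (heq.trans (ext_of_notMem_Icc hj))

end Ext

section Runs

variable {w : List ℕ}

lemma exists_vale_ascending_to (hnd : w.Nodup) :
    ∀ i, i ≤ w.length → ext w (i - 1) < ext w i →
      ∃ a, 1 ≤ a ∧ a < i ∧ IsValeAt w a ∧ ext w a < ext w i ∧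
        ∀ k, a ≤ k → k < i → ext w k < ext w (k + 1) := by
  intro i
  induction i with
  | zero => simp
  | succ i ih =>
    intro hiL hasc
    have hi : i ∈ Finset.Icc 1 w.length := by
      refine Finset.mem_Icc.2 ⟨Nat.one_le_iff_ne_zero.2 fun h => ?_, by omega⟩
      subst h
      simp [ext_of_notMem_Icc (w := w) (i := 0) (by simp)] at hasc
    by_cases hprev : ext w (i - 1) < ext w i
    · obtain ⟨a, ha1, hai, hvale, hlt, hrun⟩ := ih (by omega) hprev
      refine ⟨a, ha1, by omega, hvale, hlt.trans hasc, fun k hk1 hk2 => ?_⟩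
      rcases Nat.lt_or_ge k i with hk | hk
      · exact hrun k hk1 hk
      · rwa [show k = i by omega]
    · have hvale : ext w i < ext w (i - 1) :=
        ext_lt_of_not_lt hnd hi (by rw [Finset.mem_Icc] at hi; omega) hprev
      refine ⟨i, (Finset.mem_Icc.1 hi).1, by omega, ⟨hvale, hasc⟩, hasc, fun k hk1 hk2 => ?_⟩
      rwa [show k = i by omega]

lemma exists_vale_descending_from (hnd : w.Nodup) (i : ℕ) (hi1 : 1 ≤ i)
    (hdesc : ext w (i + 1) < ext w i) :
    ∃ b, i < b ∧ b ≤ w.length ∧ IsValeAt w b ∧ ext w b < ext w i ∧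
      ∀ k, i ≤ k → k < b → ext w (k + 1) < ext w k := by
  obtain ⟨d, hd⟩ : ∃ d, w.length - i = d := ⟨_, rfl⟩
  induction d generalizing i with
  | zero =>
    rw [ext_of_notMem_Icc (by rw [Finset.mem_Icc]; omega)] at hdesc
    simp at hdesc
  | succ d ih =>
    have hi : i + 1 ∈ Finset.Icc 1 w.length := Finset.mem_Icc.2 ⟨by omega, by omega⟩
    by_cases hnext : ext w (i + 2) < ext w (i + 1)
    · obtain ⟨b, hib, hbL, hvale, hlt, hrun⟩ := ih (i + 1) (by omega) hnext (by omega)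
      refine ⟨b, by omega, hbL, hvale, hlt.trans hdesc, fun k hk1 hk2 => ?_⟩
      rcases Nat.lt_or_ge i k with hk | hk
      · exact hrun k hk hk2
      · rwa [show k = i by omega]
    · have hvale : ext w (i + 1) < ext w (i + 2) := ext_lt_of_not_lt hnd hi (by omega) hnext
      refine ⟨i + 1, by omega, (Finset.mem_Icc.1 hi).2, ⟨by simpa using hdesc, hvale⟩, hdesc,
        fun k hk1 hk2 => ?_⟩
      rwa [show k = i by omega]

lemma lt_start_of_ascending_run {a i j : ℕ} (hrun : ∀ k, a ≤ k → k < j → ext w k < ext w (k + 1))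
    (hdesc : ext w (i + 1) < ext w i) (hij : i < j) : i < a := by
  by_contra h
  exact lt_asymm (hrun i (by omega) hij) hdesc

lemma end_lt_of_descending_run {b i j : ℕ} (hrun : ∀ k, i ≤ k → k < b → ext w (k + 1) < ext w k)
    (hasc : ext w (j - 1) < ext w j) (hij : i < j) : b < j := by
  by_contra h
  have := hrun (j - 1) (by omega) (by omega)
  rw [show j - 1 + 1 = j by omega] at this
  exact lt_asymm this hasc

end Runs

-- Sets of positions, not of letters; `ip` is a position too.
def pinnaclesBelow (w : List ℕ) (ip : ℕ) : Finset ℕ :=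
  (Finset.Icc 1 w.length).filter fun i => IsPinnacleAt w i ∧ ext w i < ext w ip

def valesBelow (w : List ℕ) (ip : ℕ) : Finset ℕ :=
  (Finset.Icc 1 w.length).filter fun i => IsValeAt w i ∧ ext w i < ext w ip

section Counting

variable {w : List ℕ}

lemma exists_strictMonoOn_pinnaclesBelow_to_valesBelow (hnd : w.Nodup) {ip : ℕ}
    (hip : ip ∈ Finset.Icc 1 w.length) (hpin : IsPinnacleAt w ip) :
    ∃ r ∈ valesBelow w ip, ∃ F : ℕ → ℕ,
      Set.MapsTo F ↑(insert ip (pinnaclesBelow w ip)) ↑((valesBelow w ip).erase r) ∧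
      StrictMonoOn F ↑(insert ip (pinnaclesBelow w ip)) := by
  choose! left hl1 hl_lt hl_vale hl_below hl_run using exists_vale_ascending_to hnd
  choose! right hr_lt hrL hr_vale hr_below hr_run using exists_vale_descending_from hnd
  have hip1 : 1 ≤ ip := (Finset.mem_Icc.1 hip).1
  have hpins : ∀ i ∈ insert ip (pinnaclesBelow w ip), (1 ≤ i ∧ i ≤ w.length) ∧
      IsPinnacleAt w i ∧ ext w i ≤ ext w ip := by
    intro i hi
    rcases Finset.mem_insert.1 hi with rfl | hi
    · exact ⟨Finset.mem_Icc.1 hip, hpin, le_rfl⟩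
    · obtain ⟨hi, hpin, hlt⟩ := Finset.mem_filter.1 hi
      exact ⟨Finset.mem_Icc.1 hi, hpin, hlt.le⟩
  have hvale_mem : ∀ v, 1 ≤ v → v ≤ w.length → IsValeAt w v → ext w v < ext w ip →
      v ∈ valesBelow w ip :=
    fun v hv1 hvL hvale hlt => Finset.mem_filter.2 ⟨Finset.mem_Icc.2 ⟨hv1, hvL⟩, hvale, hlt⟩
  have hip_lt_right : ip < right ip := hr_lt ip hip1 hpin.2
  refine ⟨right ip, hvale_mem _ (by omega) (hrL ip hip1 hpin.2) (hr_vale ip hip1 hpin.2)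
    (hr_below ip hip1 hpin.2), fun i => if i ≤ ip then left i else right i, ?_, ?_⟩
  · intro i hi
    obtain ⟨⟨hi1, hiL⟩, ⟨hasc, hdesc⟩, hle⟩ := hpins i hi
    rw [Finset.coe_erase, Set.mem_sdiff, Finset.mem_coe, Set.mem_singleton_iff]
    by_cases hiip : i ≤ ip
    · have hl := hl_lt i hiL hasc
      simp only [if_pos hiip]
      exact ⟨hvale_mem _ (hl1 i hiL hasc) (by omega) (hl_vale i hiL hasc)
        ((hl_below i hiL hasc).trans_le hle), by omega⟩
    · have hr := hr_lt i hi1 hdesc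
      have hsep := end_lt_of_descending_run (hr_run ip hip1 hpin.2) hasc (not_le.1 hiip)
      simp only [if_neg hiip]
      exact ⟨hvale_mem _ (by omega) (hrL i hi1 hdesc) (hr_vale i hi1 hdesc)
        ((hr_below i hi1 hdesc).trans_le hle), by omega⟩
  · intro i hi j hj hij
    obtain ⟨⟨hi1, hiL⟩, ⟨hasc_i, hdesc_i⟩, -⟩ := hpins i hi
    obtain ⟨⟨hj1, hjL⟩, ⟨hasc_j, hdesc_j⟩, -⟩ := hpins j hj
    have hl := hl_lt i hiL hasc_i
    have hr := hr_lt j hj1 hdesc_j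
    by_cases hjip : j ≤ ip
    · have hsep := lt_start_of_ascending_run (hl_run j hjL hasc_j) hdesc_i hij
      simp only [if_pos hjip, if_pos (hij.le.trans hjip)]
      omega
    by_cases hiip : i ≤ ip
    · simp only [if_pos hiip, if_neg hjip]
      omega
    · have hsep := end_lt_of_descending_run (hr_run i hi1 hdesc_i) hasc_j hij
      simp only [if_neg hiip, if_neg hjip]
      omega

theorem card_pinnaclesBelow_add_two_le (hnd : w.Nodup) {ip : ℕ}
    (hip : ip ∈ Finset.Icc 1 w.length) (hpin : IsPinnacleAt w ip) :
    (pinnaclesBelow w ip).card + 2 ≤ (valesBelow w ip).card := by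
  obtain ⟨r, hr, F, hF_maps, hF_mono⟩ :=
    exists_strictMonoOn_pinnaclesBelow_to_valesBelow hnd hip hpin
  have hcard := Finset.card_le_card_of_injOn F hF_maps hF_mono.injOn
  have hip_notMem : ip ∉ pinnaclesBelow w ip := fun h => lt_irrefl _ (Finset.mem_filter.1 h).2.2
  rw [Finset.card_insert_of_notMem hip_notMem, Finset.card_erase_of_mem hr] at hcard
  have := Finset.card_pos.2 ⟨r, hr⟩
  omega

lemma card_filter_image_getD_lt (hnd : w.Nodup) {S : Finset ℕ}
    (hS : S ⊆ Finset.Icc 1 w.length) {ip : ℕ} (hip : ip ∈ Finset.Icc 1 w.length) :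
    ((S.image fun i => w.getD (i - 1) 0).filter fun v => v < w.getD (ip - 1) 0).card =
      (S.filter fun i => ext w i < ext w ip).card := by
  rw [Finset.filter_image, Finset.card_image_of_injOn
    ((getD_injOn hnd).mono fun i hi => hS (Finset.mem_filter.1 hi).1)]
  exact congrArg Finset.card (Finset.filter_congr fun i hi => (ext_lt_ext_iff (hS hi) hip).symm)

lemma card_filter_pinnSet_lt (hnd : w.Nodup) {ip : ℕ} (hip : ip ∈ Finset.Icc 1 w.length) :
    ((pinnSet w).filter fun v => v < w.getD (ip - 1) 0).card = (pinnaclesBelow w ip).card := by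
  rw [pinnSet, card_filter_image_getD_lt hnd (Finset.filter_subset _ _) hip,
    Finset.filter_filter, pinnaclesBelow]

lemma card_filter_valeSet_lt (hnd : w.Nodup) {ip : ℕ} (hip : ip ∈ Finset.Icc 1 w.length) :
    ((valeSet w).filter fun v => v < w.getD (ip - 1) 0).card = (valesBelow w ip).card := by
  rw [valeSet, card_filter_image_getD_lt hnd (Finset.filter_subset _ _) hip,
    Finset.filter_filter, valesBelow]

end Counting

/-- Lemma 4.2(c): if `π ∈ S_n` has pinnacle set `P` and vale set
`V`, then `N_PV(p) ≥ 2` for every pinnacle `p`. -/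
theorem two_le_nPV (n : ℕ) (π : List ℕ) (hπ : IsPermOf n π) (P V : Finset ℕ)
    (hP : pinnSet π = P) (hV : valeSet π = V) :
    ∀ p ∈ P, 2 ≤ nPVZ P V p := by
  subst hP hV
  intro p hp
  have hnd : π.Nodup := hπ.nodup_iff.mpr List.nodup_range'
  obtain ⟨ip, hip, rfl⟩ := Finset.mem_image.1 hp
  obtain ⟨hip, hpin⟩ := Finset.mem_filter.1 hip
  have key := card_pinnaclesBelow_add_two_le hnd hip hpin
  rw [nPVZ, card_filter_pinnSet_lt hnd hip, card_filter_valeSet_lt hnd hip]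
  omega
end
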